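/- Let n ∈ ℕ, let p, q be real parameters with q > −1, and let δ, ε, τ ∈ ℂ with Re(δ) > 0 and Re(τ) < 1 + min{0, Re(ε)}. Then for x > 0, the right-sided Erdélyi–Kober fractional integral satisfies (K⁻_{ε,δ} t^{τ−1} M_n^{(p,q)}(1/t))(x) = (−1)^n Γ(1+q+n) Γ(ε−τ+1) / [Γ(1+q) Γ(δ+ε−τ+1)] · x^{τ−1} · ₃F₂(1+n−p, −n, ε−τ+1; 1+q, δ+ε−τ+1; −1/x). -/

import Mathlib

open MeasureTheory

/-- Pochhammer symbol `(a)_n = a (a+1) ⋯ (a+n−1)`. -/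
noncomputable def poch (a : ℂ) (n : ℕ) : ℂ := ∏ i ∈ Finset.range n, (a + i)

/-- Generalized hypergeometric function `ₚF_q(a₁,…,a_p; c₁,…,c_q; x)`. -/
noncomputable def genHyp (as cs : List ℂ) (x : ℂ) : ℂ :=
  ∑' k : ℕ, ((as.map (fun a => poch a k)).prod / (cs.map (fun c => poch c k)).prod)
    * x ^ k / (Nat.factorial k)

/-- Appell's double hypergeometric function `F₃(a,a′,b,b′;c;x,y)`. -/
noncomputable def appellF3 (a a' b b' c x y : ℂ) : ℂ :=
  ∑' mn : ℕ × ℕ, poch a mn.1 * poch a' mn.2 * poch b mn.1 * poch b' mn.2 /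
    (poch c (mn.1 + mn.2) * (Nat.factorial mn.1) * (Nat.factorial mn.2)) * x ^ mn.1 * y ^ mn.2

/-- Generalized binomial coefficient `binom(a,k) = a(a−1)⋯(a−k+1)/k!`. -/
noncomputable def gbinom (a : ℂ) (k : ℕ) : ℂ := (∏ i ∈ Finset.range k, (a - i)) / (Nat.factorial k)

/-- Jacobi type orthogonal polynomial `M_n^{(p,q)}(x)`. -/
noncomputable def jacobiM (n : ℕ) (p q x : ℂ) : ℂ :=
  (-1) ^ n * (Nat.factorial n) * ∑ k ∈ Finset.range (n + 1),
    gbinom (p - n - 1) k * gbinom (q + n) (n - k) * (-x) ^ k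

/-- Left-sided Marichev–Saigo–Maeda fractional integral operator. -/
noncomputable def msmLeft (δ δ' μ μ' ε : ℂ) (f : ℝ → ℂ) (x : ℝ) : ℂ :=
  (x : ℂ) ^ (-δ) / Complex.Gamma ε *
    ∫ t in Set.Ioo (0 : ℝ) x, ((x - t : ℝ) : ℂ) ^ (ε - 1) * (t : ℂ) ^ (-δ') *
      appellF3 δ δ' μ μ' ε ((1 - t / x : ℝ) : ℂ) ((1 - x / t : ℝ) : ℂ) * f t

/-- Right-sided Marichev–Saigo–Maeda fractional integral operator. -/
noncomputable def msmRight (δ δ' μ μ' ε : ℂ) (f : ℝ → ℂ) (x : ℝ) : ℂ :=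
  (x : ℂ) ^ (-δ') / Complex.Gamma ε *
    ∫ t in Set.Ioi x, ((t - x : ℝ) : ℂ) ^ (ε - 1) * (t : ℂ) ^ (-δ) *
      appellF3 δ δ' μ μ' ε ((1 - t / x : ℝ) : ℂ) ((1 - x / t : ℝ) : ℂ) * f t

/-- Left-sided Saigo fractional integral operator. -/
noncomputable def saigoLeft (δ μ ε : ℂ) (f : ℝ → ℂ) (x : ℝ) : ℂ :=
  (x : ℂ) ^ (-δ - μ) / Complex.Gamma δ *
    ∫ t in Set.Ioo (0 : ℝ) x, ((x - t : ℝ) : ℂ) ^ (δ - 1) *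
      genHyp [δ + μ, -ε] [δ] ((1 - t / x : ℝ) : ℂ) * f t

/-- Right-sided Saigo fractional integral operator. -/
noncomputable def saigoRight (δ μ ε : ℂ) (f : ℝ → ℂ) (x : ℝ) : ℂ :=
  (1 / Complex.Gamma δ) *
    ∫ t in Set.Ioi x, ((t - x : ℝ) : ℂ) ^ (δ - 1) * (t : ℂ) ^ (-δ - μ) *
      genHyp [δ + μ, -ε] [δ] ((1 - x / t : ℝ) : ℂ) * f t

/-- Left-sided Riemann–Liouville fractional integral operator. -/
noncomputable def rlLeft (δ : ℂ) (f : ℝ → ℂ) (x : ℝ) : ℂ :=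
  (1 / Complex.Gamma δ) * ∫ t in Set.Ioo (0 : ℝ) x, ((x - t : ℝ) : ℂ) ^ (δ - 1) * f t

/-- Right-sided Riemann–Liouville fractional integral operator. -/
noncomputable def rlRight (δ : ℂ) (f : ℝ → ℂ) (x : ℝ) : ℂ :=
  (1 / Complex.Gamma δ) * ∫ t in Set.Ioi x, ((t - x : ℝ) : ℂ) ^ (δ - 1) * f t

/-- Left-sided Erdélyi–Kober fractional integral operator `I⁺_{ε,δ}`. -/
noncomputable def ekLeft (ε δ : ℂ) (f : ℝ → ℂ) (x : ℝ) : ℂ :=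
  (x : ℂ) ^ (-δ - ε) / Complex.Gamma δ *
    ∫ t in Set.Ioo (0 : ℝ) x, ((x - t : ℝ) : ℂ) ^ (δ - 1) * (t : ℂ) ^ ε * f t

/-- Right-sided Erdélyi–Kober fractional integral operator `K⁻_{ε,δ}`. -/
noncomputable def ekRight (ε δ : ℂ) (f : ℝ → ℂ) (x : ℝ) : ℂ :=
  (x : ℂ) ^ ε / Complex.Gamma δ *
    ∫ t in Set.Ioi x, ((t - x : ℝ) : ℂ) ^ (δ - 1) * (t : ℂ) ^ (-δ - ε) * f t

/-- Left-sided Marichev–Saigo–Maeda fractional derivative operator. -/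
noncomputable def msmDLeft (δ δ' μ μ' ε : ℂ) (f : ℝ → ℂ) (x : ℝ) : ℂ :=
  iteratedDeriv (⌊ε.re⌋ + 1).toNat
    (msmLeft (-δ') (-δ) (-μ' + ((⌊ε.re⌋ + 1 : ℤ) : ℂ)) (-μ) (-ε + ((⌊ε.re⌋ + 1 : ℤ) : ℂ)) f) x

/-- Right-sided Marichev–Saigo–Maeda fractional derivative operator. -/
noncomputable def msmDRight (δ δ' μ μ' ε : ℂ) (f : ℝ → ℂ) (x : ℝ) : ℂ :=
  (-1 : ℂ) ^ (⌊ε.re⌋ + 1).toNat * iteratedDeriv (⌊ε.re⌋ + 1).toNat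
    (msmRight (-δ') (-δ) (-μ') (-μ + ((⌊ε.re⌋ + 1 : ℤ) : ℂ)) (-ε + ((⌊ε.re⌋ + 1 : ℤ) : ℂ)) f) x

/-!
Writing `M_n^{(p,q)}(z) = (-1)^n (1+q)_n ₂F₁(1+n-p, -n; 1+q; -z)`, the function
`t^{τ-1} M_n^{(p,q)}(1/t)` is a finite combination of powers `t^{τ-1-k}`. On a single power the
substitution `t = x/u` turns `K⁻_{ε,δ}` into a Beta integral, giving
`K⁻_{ε,δ} t^s = Γ(ε-s)/Γ(δ+ε-s) · x^s`. Since `Γ(ε-s+k)/Γ(δ+ε-s+k)` equals `Γ(ε-s)/Γ(δ+ε-s)` times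
`(ε-s)_k/(δ+ε-s)_k`, the operator appends the parameters `ε-s` and `δ+ε-s` to the
hypergeometric series.
-/

open Set

open Polynomial in
lemma poch_eq_ascPochhammer_eval (a : ℂ) (k : ℕ) : poch a k = (ascPochhammer ℂ k).eval a := by
  induction k with
  | zero => simp [poch]
  | succ k ih => rw [poch, Finset.prod_range_succ, ← poch, ih, ascPochhammer_succ_eval]

open Polynomial in
lemma poch_add (z : ℂ) (k m : ℕ) : poch z (k + m) = poch z k * poch (z + k) m := by
  simp only [poch_eq_ascPochhammer_eval, ← ascPochhammer_mul, eval_mul, eval_comp, eval_add,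
    eval_X, eval_natCast]

lemma ne_neg_natCast_of_re_pos {z : ℂ} (hz : 0 < z.re) (m : ℕ) : z ≠ -m := by
  rintro rfl
  simp only [Complex.neg_re, Complex.natCast_re, Left.neg_pos_iff] at hz
  exact hz.not_ge m.cast_nonneg

lemma poch_ne_zero {z : ℂ} (hz : ∀ m : ℕ, z ≠ -m) (k : ℕ) : poch z k ≠ 0 := by
  rw [poch_eq_ascPochhammer_eval, Ne, ascPochhammer_eval_eq_zero_iff]
  rintro ⟨m, -, hm⟩
  exact hz m (by rw [hm, neg_neg])

lemma Gamma_add_nat_eq_poch_mul_Gamma {z : ℂ} (hz : ∀ m : ℕ, z ≠ -m) (k : ℕ) :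
    Complex.Gamma (z + k) = poch z k * Complex.Gamma z := by
  rw [poch_eq_ascPochhammer_eval, ← Complex.Gamma_add_nat_div_Gamma_eq z hz,
    div_mul_cancel₀ _ (Complex.Gamma_ne_zero hz)]

open Polynomial in
lemma poch_neg_natCast (n k : ℕ) : poch (-n) k = (-1) ^ k * n.descFactorial k := by
  rw [poch_eq_ascPochhammer_eval, ascPochhammer_eval_neg_eq_descPochhammer,
    descPochhammer_eval_eq_descFactorial]

open Polynomial in
lemma gbinom_eq_descPochhammer_eval (a : ℂ) (k : ℕ) :
    gbinom a k = (descPochhammer ℂ k).eval a / k.factorial := by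
  rw [gbinom, descPochhammer_eval_eq_prod_range]

open Polynomial in
lemma gbinom_eq_neg_one_pow_mul_poch_neg (a : ℂ) (k : ℕ) :
    gbinom a k = (-1) ^ k * poch (-a) k / k.factorial := by
  rw [gbinom_eq_descPochhammer_eval, poch_eq_ascPochhammer_eval,
    ascPochhammer_eval_neg_eq_descPochhammer, ← mul_assoc, ← mul_pow, neg_one_mul, neg_neg,
    one_pow, one_mul]

open Polynomial in
lemma gbinom_eq_poch_div (a : ℂ) (k : ℕ) : gbinom a k = poch (a - k + 1) k / k.factorial := by
  rw [gbinom_eq_descPochhammer_eval, descPochhammer_eval_eq_ascPochhammer,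
    poch_eq_ascPochhammer_eval]

noncomputable def hypCoeff (as cs : List ℂ) (k : ℕ) : ℂ :=
  (as.map (fun a => poch a k)).prod / (cs.map (fun c => poch c k)).prod / k.factorial

lemma genHyp_eq_tsum_hypCoeff (as cs : List ℂ) (z : ℂ) :
    genHyp as cs z = ∑' k, hypCoeff as cs k * z ^ k :=
  tsum_congr fun k => by rw [hypCoeff]; ring

lemma hypCoeff_append_singleton (as cs : List ℂ) (a c : ℂ) (k : ℕ) :
    hypCoeff (as ++ [a]) (cs ++ [c]) k = hypCoeff as cs k * (poch a k / poch c k) := by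
  simp only [hypCoeff, List.map_append, List.prod_append, List.map_cons, List.map_nil,
    List.prod_cons, List.prod_nil, mul_one]
  ring

lemma hypCoeff_eq_zero_of_lt {as : List ℂ} {n k : ℕ} (h : -(n : ℂ) ∈ as) (hk : n < k)
    (cs : List ℂ) : hypCoeff as cs k = 0 := by
  have hpoch : poch (-n) k = 0 := by
    rw [poch_neg_natCast, Nat.descFactorial_eq_zero_iff_lt.2 hk, Nat.cast_zero, mul_zero]
  rw [hypCoeff, List.prod_eq_zero (hpoch ▸ List.mem_map_of_mem h), zero_div, zero_div]

lemma genHyp_eq_sum_range {as : List ℂ} {n : ℕ} (h : -(n : ℂ) ∈ as) (cs : List ℂ) (z : ℂ) :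
    genHyp as cs z = ∑ k ∈ Finset.range (n + 1), hypCoeff as cs k * z ^ k := by
  rw [genHyp_eq_tsum_hypCoeff, tsum_eq_sum (s := Finset.range (n + 1))]
  intro k hk
  rw [hypCoeff_eq_zero_of_lt h (by simpa [Nat.lt_succ_iff] using hk), zero_mul]

lemma jacobiM_eq_genHyp (n : ℕ) (p q z : ℂ) (hq : poch (1 + q) n ≠ 0) :
    jacobiM n p q z = (-1) ^ n * poch (1 + q) n * genHyp [1 + n - p, -n] [1 + q] (-z) := by
  rw [genHyp_eq_sum_range (n := n) (by simp), jacobiM]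
  simp only [Finset.mul_sum]
  refine Finset.sum_congr rfl fun k hk => ?_
  have hkn : k ≤ n := Nat.lt_succ_iff.1 (Finset.mem_range.1 hk)
  have hsplit : poch (1 + q) n = poch (1 + q) k * poch (1 + q + k) (n - k) := by
    rw [← poch_add, Nat.add_sub_cancel' hkn]
  have hqk : poch (1 + q) k ≠ 0 := left_ne_zero_of_mul (hsplit ▸ hq)
  have hfact : ((n - k).factorial * n.descFactorial k : ℂ) = n.factorial := by
    exact_mod_cast Nat.factorial_mul_descFactorial hkn
  have hnk : ((n - k).factorial : ℂ) ≠ 0 := Nat.cast_ne_zero.2 (n - k).factorial_ne_zero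
  have harg : q + n - ((n - k : ℕ) : ℂ) + 1 = 1 + q + k := by
    rw [Nat.cast_sub hkn]; ring
  rw [gbinom_eq_neg_one_pow_mul_poch_neg, gbinom_eq_poch_div, harg,
    show -(p - n - 1) = 1 + n - p by ring, hypCoeff]
  simp only [List.map_cons, List.map_nil, List.prod_cons, List.prod_nil, mul_one]
  rw [poch_neg_natCast, hsplit, ← hfact]
  field_simp

section BetaIoi

variable {a b : ℂ} {x : ℝ}

lemma ofReal_exp_cpow (r : ℝ) (c : ℂ) : (Real.exp r : ℂ) ^ c = Complex.exp (r * c) := by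
  rw [Complex.cpow_def_of_ne_zero (by exact_mod_cast (Real.exp_pos r).ne'),
    ← Complex.ofReal_log (Real.exp_pos r).le, Real.log_exp]

lemma image_div_Ioo_zero_one (hx : 0 < x) : (fun u : ℝ => x / u) '' Ioo 0 1 = Ioi x := by
  ext t
  constructor
  · rintro ⟨u, ⟨hu0, hu1⟩, rfl⟩
    exact (lt_div_iff₀ hu0).2 (mul_lt_of_lt_one_right hx hu1)
  · intro (ht : x < t)
    have ht0 : 0 < t := hx.trans ht
    exact ⟨x / t, ⟨div_pos hx ht0, (div_lt_one ht0).2 ht⟩, div_div_cancel₀ hx.ne'⟩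

lemma hasDerivWithinAt_div_Ioo_zero_one (x : ℝ) :
    ∀ u ∈ Ioo (0 : ℝ) 1, HasDerivWithinAt (fun u : ℝ => x / u) (-x / u ^ 2) (Ioo 0 1) u := by
  intro u hu
  simpa [div_eq_mul_inv, neg_div] using
    ((hasDerivAt_inv hu.1.ne').const_mul x).hasDerivWithinAt (s := Ioo 0 1)

lemma injOn_div_Ioo_zero_one (hx : 0 < x) : InjOn (fun u : ℝ => x / u) (Ioo 0 1) :=
  fun _ hu _ hv h => by
    rw [div_eq_div_iff hu.1.ne' hv.1.ne'] at h
    exact (mul_left_cancel₀ hx.ne' h).symm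

/-- Under `t = x / u` the integrand on `(x, ∞)`, times the Jacobian, becomes the Beta integrand. -/
lemma abs_deriv_smul_sub_cpow_mul_cpow (hx : 0 < x) {u : ℝ} (hu : u ∈ Ioo (0 : ℝ) 1) :
    |-x / u ^ 2| • (((x / u - x : ℝ) : ℂ) ^ (a - 1) * ((x / u : ℝ) : ℂ) ^ (-a - b)) =
      (x : ℂ) ^ (-b) * ((u : ℂ) ^ (b - 1) * (1 - (u : ℂ)) ^ (a - 1)) := by
  obtain ⟨hu0, hu1⟩ := hu
  set X := Real.log x
  set U := Real.log u
  set V := Real.log (1 - u)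
  have hX : x = Real.exp X := (Real.exp_log hx).symm
  have hU : u = Real.exp U := (Real.exp_log hu0).symm
  have hV : 1 - u = Real.exp V := (Real.exp_log (sub_pos.2 hu1)).symm
  have e1 : x / u - x = Real.exp (X + V - U) := by
    rw [Real.exp_sub, Real.exp_add, ← hX, ← hU, ← hV]; field_simp
  have e2 : x / u = Real.exp (X - U) := by rw [Real.exp_sub, ← hX, ← hU]
  have e3 : |-x / u ^ 2| = Real.exp (X - 2 * U) := by
    rw [neg_div, abs_neg, abs_of_pos (by positivity), Real.exp_sub, ← hX,
      two_mul, Real.exp_add, ← hU, sq]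
  have e4 : 1 - (u : ℂ) = (Real.exp V : ℂ) := by rw [← hV]; push_cast; ring
  rw [e1, e2, e3, e4, Complex.real_smul, hX, hU, ofReal_exp_cpow, ofReal_exp_cpow,
    ofReal_exp_cpow, ofReal_exp_cpow, ofReal_exp_cpow, Complex.ofReal_exp, ← Complex.exp_add,
    ← Complex.exp_add, ← Complex.exp_add, ← Complex.exp_add]
  congr 1
  push_cast
  ring

lemma integrableOn_Ioi_sub_cpow_mul_cpow (ha : 0 < a.re) (hb : 0 < b.re) (hx : 0 < x) :
    IntegrableOn (fun t : ℝ => ((t - x : ℝ) : ℂ) ^ (a - 1) * (t : ℂ) ^ (-a - b)) (Ioi x) := by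
  rw [← image_div_Ioo_zero_one hx, integrableOn_image_iff_integrableOn_abs_deriv_smul
    measurableSet_Ioo (hasDerivWithinAt_div_Ioo_zero_one x) (injOn_div_Ioo_zero_one hx)]
  refine IntegrableOn.congr_fun ?_
    (fun _ hu => (abs_deriv_smul_sub_cpow_mul_cpow hx hu).symm) measurableSet_Ioo
  exact ((Complex.betaIntegral_convergent hb ha).1.mono_set Ioo_subset_Ioc_self).const_mul _

lemma integral_Ioi_sub_cpow_mul_cpow (ha : 0 < a.re) (hb : 0 < b.re) (hx : 0 < x) :
    ∫ t in Ioi x, ((t - x : ℝ) : ℂ) ^ (a - 1) * (t : ℂ) ^ (-a - b) =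
      (x : ℂ) ^ (-b) * (Complex.Gamma a * Complex.Gamma b / Complex.Gamma (a + b)) := by
  rw [← image_div_Ioo_zero_one hx, integral_image_eq_integral_abs_deriv_smul
    measurableSet_Ioo (hasDerivWithinAt_div_Ioo_zero_one x) (injOn_div_Ioo_zero_one hx),
    setIntegral_congr_fun measurableSet_Ioo fun _ hu => abs_deriv_smul_sub_cpow_mul_cpow hx hu,
    integral_const_mul, integral_Ioc_eq_integral_Ioo.symm,
    ← intervalIntegral.integral_of_le zero_le_one, ← Complex.betaIntegral,
    Complex.betaIntegral_eq_Gamma_mul_div _ _ hb ha, mul_comm (Complex.Gamma b), add_comm b]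

end BetaIoi

section ErdelyiKober

variable {ε δ : ℂ} {x : ℝ}

lemma ekRight_congr {f g : ℝ → ℂ} (h : EqOn f g (Ioi x)) :
    ekRight ε δ f x = ekRight ε δ g x := by
  rw [ekRight, ekRight, setIntegral_congr_fun measurableSet_Ioi fun t ht => by rw [h ht]]

lemma ekRight_const_mul (c : ℂ) (f : ℝ → ℂ) :
    ekRight ε δ (fun t => c * f t) x = c * ekRight ε δ f x := by
  simp only [ekRight, mul_left_comm _ c, integral_const_mul]

lemma ekRight_finset_sum {ι : Type*} (s : Finset ι) {f : ι → ℝ → ℂ}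
    (hf : ∀ i ∈ s, IntegrableOn
      (fun t : ℝ => ((t - x : ℝ) : ℂ) ^ (δ - 1) * (t : ℂ) ^ (-δ - ε) * f i t) (Ioi x)) :
    ekRight ε δ (fun t => ∑ i ∈ s, f i t) x = ∑ i ∈ s, ekRight ε δ (f i) x := by
  simp only [ekRight, Finset.mul_sum, integral_finsetSum s hf]

lemma ekRight_integrand_cpow_eqOn (hx : 0 ≤ x) (s : ℂ) :
    EqOn (fun t : ℝ => ((t - x : ℝ) : ℂ) ^ (δ - 1) * (t : ℂ) ^ (-δ - ε) * (t : ℂ) ^ s)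
      (fun t : ℝ => ((t - x : ℝ) : ℂ) ^ (δ - 1) * (t : ℂ) ^ (-δ - (ε - s))) (Ioi x) :=
  fun t ht => by
    have ht0 : (t : ℂ) ≠ 0 := Complex.ofReal_ne_zero.2 (hx.trans_lt ht).ne'
    dsimp only
    rw [mul_assoc, ← Complex.cpow_add _ _ ht0, sub_add]

lemma integrableOn_ekRight_integrand_cpow {s : ℂ} (hδ : 0 < δ.re) (hs : 0 < (ε - s).re)
    (hx : 0 < x) :
    IntegrableOn (fun t : ℝ => ((t - x : ℝ) : ℂ) ^ (δ - 1) * (t : ℂ) ^ (-δ - ε) * (t : ℂ) ^ s)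
      (Ioi x) :=
  (integrableOn_Ioi_sub_cpow_mul_cpow hδ hs hx).congr_fun
    (ekRight_integrand_cpow_eqOn hx.le s).symm measurableSet_Ioi

lemma ekRight_cpow {s : ℂ} (hδ : 0 < δ.re) (hs : 0 < (ε - s).re) (hx : 0 < x) :
    ekRight ε δ (fun t => (t : ℂ) ^ s) x =
      Complex.Gamma (ε - s) / Complex.Gamma (δ + ε - s) * (x : ℂ) ^ s := by
  have hx0 : (x : ℂ) ≠ 0 := Complex.ofReal_ne_zero.2 hx.ne'
  rw [ekRight, setIntegral_congr_fun measurableSet_Ioi (ekRight_integrand_cpow_eqOn hx.le s),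
    integral_Ioi_sub_cpow_mul_cpow hδ hs hx, add_sub_assoc]
  have hpow : (x : ℂ) ^ ε * (x : ℂ) ^ (-(ε - s)) = (x : ℂ) ^ s := by
    rw [← Complex.cpow_add _ _ hx0]; ring_nf
  rw [← hpow]
  field_simp [Complex.Gamma_ne_zero_of_re_pos hδ]

theorem ekRight_cpow_mul_genHyp {s : ℂ} (hδ : 0 < δ.re) (hs : 0 < (ε - s).re) (hx : 0 < x)
    {as : List ℂ} {n : ℕ} (hn : -(n : ℂ) ∈ as) (cs : List ℂ) (w : ℂ) :
    ekRight ε δ (fun t => (t : ℂ) ^ s * genHyp as cs (w / t)) x =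
      Complex.Gamma (ε - s) / Complex.Gamma (δ + ε - s) * (x : ℂ) ^ s *
        genHyp (as ++ [ε - s]) (cs ++ [δ + ε - s]) (w / x) := by
  have hpow : ∀ k : ℕ, 0 < (ε - (s - k)).re := fun k => by
    rw [sub_sub_eq_add_sub, add_sub_right_comm, Complex.add_re, Complex.natCast_re]
    exact add_pos_of_pos_of_nonneg hs k.cast_nonneg
  have hexpand : EqOn (fun t : ℝ => (t : ℂ) ^ s * genHyp as cs (w / t))
      (fun t => ∑ k ∈ Finset.range (n + 1), hypCoeff as cs k * w ^ k * (t : ℂ) ^ (s - k))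
      (Ioi x) := fun t ht => by
    have ht : (t : ℂ) ≠ 0 := Complex.ofReal_ne_zero.2 (hx.trans ht).ne'
    simp only [genHyp_eq_sum_range hn, Finset.mul_sum, Complex.cpow_sub _ _ ht,
      Complex.cpow_natCast, div_pow]
    exact Finset.sum_congr rfl fun k _ => by ring
  have hint : ∀ k ∈ Finset.range (n + 1), IntegrableOn (fun t : ℝ =>
      ((t - x : ℝ) : ℂ) ^ (δ - 1) * (t : ℂ) ^ (-δ - ε) * (hypCoeff as cs k * w ^ k * t ^ (s - k)))
      (Ioi x) := fun k _ =>
    IntegrableOn.congr_fun ((integrableOn_ekRight_integrand_cpow hδ (hpow k) hx).const_mul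
      (hypCoeff as cs k * w ^ k)) (fun t _ => by ring) measurableSet_Ioi
  rw [ekRight_congr hexpand, ekRight_finset_sum _ hint,
    genHyp_eq_sum_range (List.mem_append_left _ hn), Finset.mul_sum]
  refine Finset.sum_congr rfl fun k _ => ?_
  have hx0 : (x : ℂ) ≠ 0 := Complex.ofReal_ne_zero.2 hx.ne'
  have hB : 0 < (δ + ε - s).re := by
    rw [add_sub_assoc, Complex.add_re]; exact add_pos hδ hs
  rw [ekRight_const_mul, ekRight_cpow hδ (hpow k) hx, hypCoeff_append_singleton,
    show ε - (s - k) = ε - s + k by ring, show δ + ε - (s - k) = δ + ε - s + k by ring,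
    Gamma_add_nat_eq_poch_mul_Gamma (ne_neg_natCast_of_re_pos hs),
    Gamma_add_nat_eq_poch_mul_Gamma (ne_neg_natCast_of_re_pos hB),
    Complex.cpow_sub _ _ hx0, Complex.cpow_natCast, div_pow]
  ring

end ErdelyiKober

/-- Corollary 6: Erdélyi–Kober right-sided fractional integral of the Jacobi type
polynomial. -/
theorem ekRight_jacobiM (n : ℕ) (p q : ℝ) (hq : -1 < q) (δ ε τ : ℂ)
    (hδ : 0 < δ.re) (hτ : τ.re < 1 + min 0 ε.re) (x : ℝ) (hx : 0 < x) :
    ekRight ε δ (fun t => (t : ℂ) ^ (τ - 1) * jacobiM n p q (1 / t)) x =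
      (-1) ^ n * Complex.Gamma (1 + (q : ℂ) + n) * Complex.Gamma (ε - τ + 1) /
        (Complex.Gamma (1 + (q : ℂ)) * Complex.Gamma (δ + ε - τ + 1)) *
        (x : ℂ) ^ (τ - 1) *
        genHyp [1 + (n : ℂ) - p, -(n : ℂ), ε - τ + 1]
          [1 + (q : ℂ), δ + ε - τ + 1] (-(1 / (x : ℂ))) := by
  have hs : 0 < (ε - (τ - 1)).re := by
    simp only [Complex.sub_re, Complex.one_re]
    linarith [min_le_right 0 ε.re]
  have hq1 : ∀ m : ℕ, 1 + (q : ℂ) ≠ -m := ne_neg_natCast_of_re_pos <| by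
    simp only [Complex.add_re, Complex.one_re, Complex.ofReal_re]; linarith
  have hjacobi : (fun t : ℝ => (t : ℂ) ^ (τ - 1) * jacobiM n p q (1 / t)) = fun t : ℝ =>
      (-1) ^ n * poch (1 + q) n *
        ((t : ℂ) ^ (τ - 1) * genHyp [1 + n - p, -n] [1 + q] (-1 / t)) := by
    funext t
    rw [jacobiM_eq_genHyp _ _ _ _ (poch_ne_zero hq1 n), neg_div]
    ring
  rw [hjacobi, ekRight_const_mul, ekRight_cpow_mul_genHyp hδ hs hx (n := n) (by simp),
    Gamma_add_nat_eq_poch_mul_Gamma hq1, neg_div, show ε - (τ - 1) = ε - τ + 1 by ring,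
    show δ + ε - (τ - 1) = δ + ε - τ + 1 by ring]
  simp only [List.cons_append, List.nil_append]
  field_simp [Complex.Gamma_ne_zero hq1]
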